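/- Suppose δ is regular and V ⊆ V̄ satisfies the δ cover property, and suppose V and N are transitive submodels of V̄ that have the same subsets of Ord of size less than δ (each set of ordinals of size < δ in V̄ lying in V iff lying in N — as established via a common cover B ∈ V ∩ N of size ≤ δ and the fixing of small subsets of ordinals by an embedding with critical point above δ). Then if additionally V ⊆ V̄ and N ⊆ N̄ (with N̄ ⊆ V̄) satisfy the δ approximation property, every set of ordinals A ∈ N lies in V: indeed every δ-approximation A ∩ a over V (a ∈ V, |a| < δ) satisfies a ∈ N and A ∩ a ∈ N, hence A ∩ a ∈ V, so A ∈ V by approximation. -/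
import Mathlib


open Cardinal

/-- The δ approximation property for a pair `M ⊆ Mb` of families of sets of ordinals. -/
def ApproxProp (δ : Cardinal.{0}) (M Mb : Set (Set Ordinal)) : Prop :=
  ∀ A ∈ Mb, (∀ a ∈ M, #a < Cardinal.lift.{1} δ → A ∩ a ∈ M) → A ∈ M

/-- suppose `δ` is regular, `V ⊆ V̄` satisfies the `δ` cover property, `V`
and `N` are submodels of `V̄` (with `N ⊆ N̄ ⊆ V̄`) having the same subsets of `Ord` of
size less than `δ`, and both `V ⊆ V̄` and `N ⊆ N̄` satisfy the `δ` approximation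
property. Then every set of ordinals `A ∈ N` lies in `V`. -/
theorem submodel_subset_of_ground_model
    (δ : Cardinal.{0}) (hδreg : δ.IsRegular)
    (V Vb N Nb : Set (Set Ordinal))
    (hVVb : V ⊆ Vb) (hNNb : N ⊆ Nb) (hNbVb : Nb ⊆ Vb)
    -- the δ cover property for V ⊆ V̄:
    (hcov : ∀ A ∈ Vb, #A < Cardinal.lift.{1} δ →
      ∃ B ∈ V, A ⊆ B ∧ #B < Cardinal.lift.{1} δ)
    -- V and N have the same subsets of Ord of size less than δ:
    (hsame : ∀ A ∈ Vb, #A < Cardinal.lift.{1} δ → (A ∈ V ↔ A ∈ N))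
    -- the δ approximation properties:
    (happV : ApproxProp δ V Vb) (happN : ApproxProp δ N Nb)
    -- N is closed under intersections:
    (hintN : ∀ A ∈ N, ∀ a ∈ N, A ∩ a ∈ N) :
    ∀ A ∈ N, A ∈ V := by
  intro A hA
  refine happV A (hNbVb (hNNb hA)) ?_
  intro a haV ha
  have haN : a ∈ N := (hsame a (hVVb haV) ha).mp haV
  have hAa : A ∩ a ∈ N := hintN A hA a haN
  have hsmall : #(A ∩ a : Set Ordinal) < Cardinal.lift.{1} δ :=
    lt_of_le_of_lt (Cardinal.mk_le_mk_of_subset Set.inter_subset_right) ha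
  exact (hsame _ (hNbVb (hNNb hAa)) hsmall).mpr hAa
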